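/- Let (X,Y) have the Lancaster density with coefficient sequence (ρₙ) satisfying Σₙ |ρₙ| cₙ dₙ ≤ 1 and ρ₁ ≠ 0. Then X and Y have strictly linear regressions on each other: there exist constants a₁ ≠ 0, a₀, b₁ ≠ 0, b₀ such that E(X|Y) = a₁ Y + a₀ a.s. and E(Y|X) = b₁ X + b₀ a.s. -/

import Mathlib

open MeasureTheory ProbabilityTheory Real
open scoped ENNReal

noncomputable def covar {Ω : Type*} [MeasurableSpace Ω] (μ : Measure Ω) (X Y : Ω → ℝ) : ℝ :=
  ∫ ω, (X ω - ∫ a, X a ∂μ) * (Y ω - ∫ a, Y a ∂μ) ∂μ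

noncomputable def pearson {Ω : Type*} [MeasurableSpace Ω] (μ : Measure Ω) (X Y : Ω → ℝ) : ℝ :=
  covar μ X Y / (Real.sqrt (variance X μ) * Real.sqrt (variance Y μ))

noncomputable def maxCorr {Ω : Type*} [MeasurableSpace Ω] (μ : Measure Ω) (X Y : Ω → ℝ) : ℝ :=
  sSup { r : ℝ | ∃ g₁ g₂ : ℝ → ℝ, Measurable g₁ ∧ Measurable g₂ ∧
    MemLp (g₁ ∘ X) 2 μ ∧ MemLp (g₂ ∘ Y) 2 μ ∧
    0 < variance (g₁ ∘ X) μ ∧ 0 < variance (g₂ ∘ Y) μ ∧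
    r = pearson μ (g₁ ∘ X) (g₂ ∘ Y) }

/-- `g` is a probability density on `ℝ` supported in `[a, b]`. -/
def IsDensityOn (g : ℝ → ℝ) (a b : ℝ) : Prop :=
  (∀ x, 0 ≤ g x) ∧ (∀ x, x ∉ Set.Icc a b → g x = 0) ∧ (∫ x, g x = 1)

/-- `φ` is the orthonormal polynomial system of the density `g`:
degree `n`, positive leading coefficients, orthonormal in `L²(g dx)`. -/
def OrthonormalPolys (g : ℝ → ℝ) (φ : ℕ → Polynomial ℝ) : Prop :=
  (∀ n, (φ n).natDegree = n) ∧ (∀ n, 0 < (φ n).leadingCoeff) ∧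
  (∀ m n, ∫ x, (φ m).eval x * (φ n).eval x * g x = if m = n then 1 else 0)

/-- The Lancaster density `f(x,y) = f₁(x) f₂(y) (1 + Σₙ≥₁ ρₙ φₙ(x) ψₙ(y))`. -/
noncomputable def lancaster (f₁ f₂ : ℝ → ℝ) (φ ψ : ℕ → Polynomial ℝ) (ρ : ℕ → ℝ)
    (x y : ℝ) : ℝ :=
  f₁ x * f₂ y * (1 + ∑' n : ℕ, ρ (n + 1) * (φ (n + 1)).eval x * (ψ (n + 1)).eval y)

/-!
Integrate the Lancaster expansion term by term in `x`; this is legitimate because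
`Σ |ρₙ| cₙ dₙ` converges. Since `x = (φ₁(x) - φ₁(0)) / p₁` and `φ₀ = 1`, orthonormality kills
every term except those with `n ≤ 1`, leaving
`∫ x f(x, y) dx = (ρ₁ ψ₁(y) - φ₁(0)) / p₁ · f₂(y)` and `∫ f(x, y) dx = f₂(y)`.
So the mean of the fibre over `y` is affine in `y` with slope `ρ₁ q₁ / p₁ ≠ 0`, and Fubini
identifies it with `E(X | Y)`; exchanging the roles of `X` and `Y` gives `E(Y | X)`.
Because `Σ |ρₙ| cₙ dₙ ≤ 1`, the density satisfies `0 ≤ f ≤ 2 f₁ f₂`, so every integral involved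
is finite.
-/

open Set

lemma measurable_tsum_of_summable {α : Type*} [MeasurableSpace α] {F : ℕ → α → ℝ}
    (hF : ∀ n, Measurable (F n)) (hs : ∀ p, Summable fun n => F n p) :
    Measurable fun p => ∑' n, F n p :=
  measurable_of_tendsto_metrizable (fun _ => Finset.measurable_sum _ fun n _ => hF n)
    (tendsto_pi_nhds.2 fun p => (hs p).hasSum.tendsto_sum_nat)

lemma Polynomial.eval_eq_coeff_zero_add_leadingCoeff_mul {P : Polynomial ℝ}
    (hP : P.natDegree = 1) (x : ℝ) : P.eval x = P.coeff 0 + P.leadingCoeff * x := by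
  rw [Polynomial.leadingCoeff, hP]
  conv_lhs => rw [Polynomial.eq_X_add_C_of_natDegree_le_one hP.le]
  simp only [Polynomial.eval_add, Polynomial.eval_mul, Polynomial.eval_C, Polynomial.eval_X]
  ring

lemma Polynomial.abs_eval_le_sSup (P : Polynomial ℝ) {a b x : ℝ} (hx : x ∈ Icc a b) :
    |P.eval x| ≤ sSup ((fun x => |P.eval x|) '' Icc a b) :=
  le_csSup (isCompact_Icc.image P.continuous.abs).bddAbove ⟨x, hx, rfl⟩

lemma Polynomial.exists_abs_eval_le (Q : Polynomial ℝ) (a b : ℝ) :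
    ∃ M, ∀ x ∈ Icc a b, |Q.eval x| ≤ M :=
  isCompact_Icc.exists_bound_of_continuousOn Q.continuous.continuousOn

namespace IsDensityOn

variable {g : ℝ → ℝ} {a b : ℝ}

lemma integrable (hf : IsDensityOn g a b) : Integrable g :=
  Integrable.of_integral_ne_zero (by rw [hf.2.2]; exact one_ne_zero)

lemma abs_mul_le (hf : IsDensityOn g a b) {u : ℝ → ℝ} {M : ℝ}
    (hM : ∀ x ∈ Icc a b, |u x| ≤ M) (x : ℝ) : |u x * g x| ≤ M * g x := by
  by_cases hx : x ∈ Icc a b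
  · rw [abs_mul, abs_of_nonneg (hf.1 x)]
    exact mul_le_mul_of_nonneg_right (hM x hx) (hf.1 x)
  · simp [hf.2.1 x hx]

lemma integrable_mul (hf : IsDensityOn g a b) {u : ℝ → ℝ} (hu : AEStronglyMeasurable u)
    {M : ℝ} (hM : ∀ x ∈ Icc a b, |u x| ≤ M) : Integrable fun x => u x * g x :=
  (hf.integrable.const_mul M).mono' (hu.mul hf.integrable.aestronglyMeasurable)
    (ae_of_all _ (hf.abs_mul_le hM))

lemma integrable_eval_mul (hf : IsDensityOn g a b) (Q : Polynomial ℝ) :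
    Integrable fun x => Q.eval x * g x :=
  have ⟨_, hM⟩ := Q.exists_abs_eval_le a b
  hf.integrable_mul Q.continuous.aestronglyMeasurable hM

lemma integral_abs_mul_le (hf : IsDensityOn g a b) {u : ℝ → ℝ} (hu : AEStronglyMeasurable u)
    {M : ℝ} (hM : ∀ x ∈ Icc a b, |u x| ≤ M) : ∫ x, |u x * g x| ≤ M :=
  calc ∫ x, |u x * g x| ≤ ∫ x, M * g x :=
        integral_mono (hf.integrable_mul hu hM).abs (hf.integrable.const_mul M) (hf.abs_mul_le hM)
    _ = M := by rw [integral_const_mul, hf.2.2, mul_one]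

variable {F : ℕ → ℝ → ℝ} {B : ℕ → ℝ}

lemma integrable_tsum_mul (hf : IsDensityOn g a b) (hg : Measurable g)
    (hF : ∀ n, Measurable (F n)) (hFB : ∀ n, ∀ x ∈ Icc a b, |F n x| ≤ B n) (hB : Summable B) :
    Integrable fun x => (∑' n, F n x) * g x := by
  have hbound : ∀ x ∈ Icc a b, |∑' n, F n x| ≤ ∑' n, B n := fun x hx =>
    tsum_of_norm_bounded (f := fun n => F n x) hB.hasSum fun n => hFB n x hx
  have hsummable : ∀ x, Summable fun n => F n x * g x := by
    intro x
    by_cases hx : x ∈ Icc a b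
    · exact Summable.of_norm_bounded (hB.mul_right (g x)) fun n => hf.abs_mul_le (hFB n) x
    · simp [hf.2.1 x hx]
  have hmeas : Measurable fun x => (∑' n, F n x) * g x := by
    simp_rw [← tsum_mul_right]
    exact measurable_tsum_of_summable (fun n => (hF n).mul hg) hsummable
  exact (hf.integrable.const_mul _).mono' hmeas.aestronglyMeasurable
    (ae_of_all _ (hf.abs_mul_le hbound))

lemma integral_tsum_mul (hf : IsDensityOn g a b) (hF : ∀ n, Measurable (F n))
    (hFB : ∀ n, ∀ x ∈ Icc a b, |F n x| ≤ B n) (hB : Summable B) :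
    ∫ x, (∑' n, F n x) * g x = ∑' n, ∫ x, F n x * g x := by
  simp_rw [← tsum_mul_right]
  refine (integral_tsum_of_summable_integral_norm
    (fun n => hf.integrable_mul (hF n).aestronglyMeasurable (hFB n)) ?_).symm
  exact hB.of_nonneg_of_le (fun n => integral_nonneg fun x => norm_nonneg _)
    fun n => hf.integral_abs_mul_le (hF n).aestronglyMeasurable (hFB n)

end IsDensityOn

namespace OrthonormalPolys

variable {g : ℝ → ℝ} {φ : ℕ → Polynomial ℝ}

lemma apply_zero (hφ : OrthonormalPolys g φ) (hg : ∫ x, g x = 1) : φ 0 = 1 := by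
  obtain ⟨r, hr⟩ := Polynomial.natDegree_eq_zero.mp (hφ.1 0)
  have hpos : 0 < r := by simpa [← hr] using hφ.2.1 0
  have hnorm := hφ.2.2 0 0
  simp only [← hr, Polynomial.eval_C, if_true, integral_const_mul, hg, mul_one] at hnorm
  rw [← hr, show r = 1 by nlinarith, map_one]

lemma integral_eval_mul (hφ : OrthonormalPolys g φ) (hg : ∫ x, g x = 1) (n : ℕ) :
    ∫ x, (φ n).eval x * g x = if n = 0 then 1 else 0 := by
  simpa [hφ.apply_zero hg, eq_comm] using hφ.2.2 0 n

lemma integral_mul_eval_mul {a b : ℝ} (hφ : OrthonormalPolys g φ) (hf : IsDensityOn g a b)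
    (n : ℕ) : ∫ x, x * ((φ n).eval x * g x) =
      ((if n = 1 then 1 else 0) - (φ 1).coeff 0 * (if n = 0 then 1 else 0)) /
        (φ 1).leadingCoeff := by
  have hp : (φ 1).leadingCoeff ≠ 0 := (hφ.2.1 1).ne'
  have hx : ∀ x, x * ((φ n).eval x * g x) = ((φ 1 * φ n).eval x * g x
      - (φ 1).coeff 0 * ((φ n).eval x * g x)) / (φ 1).leadingCoeff := fun x => by
    rw [Polynomial.eval_mul, Polynomial.eval_eq_coeff_zero_add_leadingCoeff_mul (hφ.1 1)]
    field_simp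
    ring
  simp_rw [hx, integral_div]
  rw [integral_sub (hf.integrable_eval_mul _) ((hf.integrable_eval_mul _).const_mul _),
    integral_const_mul, hφ.integral_eval_mul hf.2.2]
  simp_rw [Polynomial.eval_mul, hφ.2.2 1 n, eq_comm (a := 1)]

end OrthonormalPolys

section JointDensity

variable {Ω β γ : Type*} [MeasurableSpace Ω] [MeasurableSpace β] [MeasurableSpace γ]
  {μ : Measure Ω}

lemma integral_comp_eq_integral_mul_of_map_eq_withDensity {ν : Measure β} {Z : Ω → β}
    (hZ : Measurable Z) {D : β → ℝ} (hD : Measurable D) (hD0 : 0 ≤ D)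
    (hmap : μ.map Z = ν.withDensity fun p => ENNReal.ofReal (D p))
    {g : β → ℝ} (hg : Measurable g) :
    ∫ ω, g (Z ω) ∂μ = ∫ p, D p * g p ∂ν := by
  rw [← integral_map hZ.aemeasurable hg.aestronglyMeasurable, hmap,
    integral_withDensity_eq_integral_toReal_smul hD.ennreal_ofReal
      (ae_of_all _ fun _ => ENNReal.ofReal_lt_top)]
  simp [ENNReal.toReal_ofReal (hD0 _)]

lemma integrable_comp_iff_of_map_eq_withDensity {ν : Measure β} {Z : Ω → β}
    (hZ : Measurable Z) {D : β → ℝ} (hD : Measurable D) (hD0 : 0 ≤ D)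
    (hmap : μ.map Z = ν.withDensity fun p => ENNReal.ofReal (D p))
    {g : β → ℝ} (hg : Measurable g) :
    Integrable (fun ω => g (Z ω)) μ ↔ Integrable (fun p => D p * g p) ν := by
  rw [← Function.comp_def, ← integrable_map_measure hg.aestronglyMeasurable hZ.aemeasurable,
    hmap, integrable_withDensity_iff_integrable_smul' hD.ennreal_ofReal
      (ae_of_all _ fun _ => ENNReal.ofReal_lt_top)]
  simp [ENNReal.toReal_ofReal (hD0 _)]

lemma map_prod_swap_eq_withDensity {X : Ω → β} {Y : Ω → γ} (hX : Measurable X)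
    (hY : Measurable Y) {ν₁ : Measure β} {ν₂ : Measure γ} [SFinite ν₁] [SFinite ν₂]
    {D : β × γ → ℝ≥0∞} (hmap : μ.map (fun ω => (X ω, Y ω)) = (ν₁.prod ν₂).withDensity D) :
    μ.map (fun ω => (Y ω, X ω)) = (ν₂.prod ν₁).withDensity (D ∘ Prod.swap) := by
  rw [show (fun ω => (Y ω, X ω)) = Prod.swap ∘ fun ω => (X ω, Y ω) from rfl,
    ← Measure.map_map measurable_swap (hX.prodMk hY), hmap]
  ext s hs
  rw [Measure.map_apply measurable_swap hs, withDensity_apply _ (hs.preimage measurable_swap),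
    withDensity_apply _ hs]
  exact Measure.measurePreserving_swap.setLIntegral_comp_preimage_emb
    MeasurableEquiv.prodComm.measurableEmbedding (D ∘ Prod.swap) s

variable {X : Ω → ℝ} {Y : Ω → β} {ν₁ : Measure ℝ} {ν₂ : Measure β}
  [SFinite ν₁] [SFinite ν₂] {D : ℝ × β → ℝ}

lemma setIntegral_preimage_eq_of_map_eq_withDensity (hX : Measurable X) (hY : Measurable Y)
    (hD : Measurable D) (hD0 : 0 ≤ D)
    (hmap : μ.map (fun ω => (X ω, Y ω)) = (ν₁.prod ν₂).withDensity fun p => ENNReal.ofReal (D p))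
    {g : ℝ × β → ℝ} (hg : Measurable g) (hint : Integrable (fun p => D p * g p) (ν₁.prod ν₂))
    {B : Set β} (hB : MeasurableSet B) :
    ∫ ω in Y ⁻¹' B, g (X ω, Y ω) ∂μ = ∫ y in B, ∫ x, D (x, y) * g (x, y) ∂ν₁ ∂ν₂ := by
  have hind : ∀ ω, (Y ⁻¹' B).indicator (fun ω => g (X ω, Y ω)) ω
      = (Prod.snd ⁻¹' B).indicator g (X ω, Y ω) := fun _ => rfl
  rw [← integral_indicator (hY hB), ← integral_indicator hB, integral_congr_ae (ae_of_all _ hind),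
    integral_comp_eq_integral_mul_of_map_eq_withDensity (hX.prodMk hY) hD hD0 hmap
      (hg.indicator (measurable_snd hB)), integral_prod_symm]
  · refine integral_congr_ae (ae_of_all _ fun y => ?_)
    by_cases hy : y ∈ B <;> simp [hy]
  · simp_rw [← Set.indicator_mul_right]
    exact hint.indicator (measurable_snd hB)

theorem condExp_ae_eq_of_map_eq_withDensity [IsFiniteMeasure μ] (hX : Measurable X)
    (hY : Measurable Y) (hD : Measurable D) (hD0 : 0 ≤ D)
    (hmap : μ.map (fun ω => (X ω, Y ω)) = (ν₁.prod ν₂).withDensity fun p => ENNReal.ofReal (D p))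
    {h : β → ℝ} (hh : Measurable h)
    (hX_int : Integrable (fun p => D p * p.1) (ν₁.prod ν₂))
    (hh_int : Integrable (fun p => D p * h p.2) (ν₁.prod ν₂))
    (hfiber : ∀ y, ∫ x, D (x, y) * x ∂ν₁ = h y * ∫ x, D (x, y) ∂ν₁) :
    μ[X | MeasurableSpace.comap Y inferInstance] =ᵐ[μ] fun ω => h (Y ω) := by
  have hZ := hX.prodMk hY
  have hXμ : Integrable X μ :=
    (integrable_comp_iff_of_map_eq_withDensity hZ hD hD0 hmap measurable_fst).2 hX_int
  have hhμ : Integrable (fun ω => h (Y ω)) μ :=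
    (integrable_comp_iff_of_map_eq_withDensity hZ hD hD0 hmap (hh.comp measurable_snd)).2 hh_int
  refine (ae_eq_condExp_of_forall_setIntegral_eq hY.comap_le hXμ
    (fun _ _ _ => hhμ.integrableOn) ?_
    (hh.comp (comap_measurable Y)).aestronglyMeasurable).symm
  rintro _ ⟨B, hB, rfl⟩ -
  calc ∫ ω in Y ⁻¹' B, h (Y ω) ∂μ = ∫ y in B, ∫ x, D (x, y) * h y ∂ν₁ ∂ν₂ :=
        setIntegral_preimage_eq_of_map_eq_withDensity hX hY hD hD0 hmap
          (hh.comp measurable_snd) hh_int hB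
    _ = ∫ y in B, ∫ x, D (x, y) * x ∂ν₁ ∂ν₂ := by simp_rw [integral_mul_const, hfiber, mul_comm]
    _ = ∫ ω in Y ⁻¹' B, X ω ∂μ :=
        (setIntegral_preimage_eq_of_map_eq_withDensity hX hY hD hD0 hmap
          measurable_fst hX_int hB).symm

end JointDensity

section Lancaster

variable {α₁ ω₁ α₂ ω₂ : ℝ} {f₁ f₂ : ℝ → ℝ} {φ ψ : ℕ → Polynomial ℝ} {c d ρ : ℕ → ℝ}

/-- With the factor `f₁ x * f₂ y` included, the series of these terms converges at every point,
not only on the support. -/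
noncomputable def lancasterTerm (f₁ f₂ : ℝ → ℝ) (φ ψ : ℕ → Polynomial ℝ) (ρ : ℕ → ℝ) (n : ℕ)
    (x y : ℝ) : ℝ :=
  ρ (n + 1) * (φ (n + 1)).eval x * (ψ (n + 1)).eval y * (f₁ x * f₂ y)

lemma lancaster_eq_add_tsum (x y : ℝ) :
    lancaster f₁ f₂ φ ψ ρ x y = f₁ x * f₂ y + ∑' n, lancasterTerm f₁ f₂ φ ψ ρ n x y := by
  simp only [lancaster, lancasterTerm, tsum_mul_right]
  ring

lemma lancaster_swap (x y : ℝ) : lancaster f₂ f₁ ψ φ ρ y x = lancaster f₁ f₂ φ ψ ρ x y := by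
  simp only [lancaster, mul_right_comm _ ((ψ _).eval y), mul_comm (f₂ y)]

lemma abs_lancasterTerm_le (hf₁ : IsDensityOn f₁ α₁ ω₁) (hf₂ : IsDensityOn f₂ α₂ ω₂)
    (hc : ∀ n, ∀ x ∈ Icc α₁ ω₁, |(φ n).eval x| ≤ c n)
    (hd : ∀ n, ∀ y ∈ Icc α₂ ω₂, |(ψ n).eval y| ≤ d n) (n : ℕ) (x y : ℝ) :
    |lancasterTerm f₁ f₂ φ ψ ρ n x y| ≤ |ρ (n + 1)| * c (n + 1) * d (n + 1) * (f₁ x * f₂ y) := by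
  by_cases hx : x ∈ Icc α₁ ω₁
  · by_cases hy : y ∈ Icc α₂ ω₂
    · have hff := mul_nonneg (hf₁.1 x) (hf₂.1 y)
      have hc0 := (abs_nonneg _).trans (hc (n + 1) x hx)
      rw [lancasterTerm, abs_mul, abs_of_nonneg hff, abs_mul, abs_mul]
      gcongr
      exacts [hc (n + 1) x hx, hd (n + 1) y hy]
    · simp [lancasterTerm, hf₂.2.1 y hy]
  · simp [lancasterTerm, hf₁.2.1 x hx]

lemma summable_lancasterTerm (hf₁ : IsDensityOn f₁ α₁ ω₁) (hf₂ : IsDensityOn f₂ α₂ ω₂)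
    (hc : ∀ n, ∀ x ∈ Icc α₁ ω₁, |(φ n).eval x| ≤ c n)
    (hd : ∀ n, ∀ y ∈ Icc α₂ ω₂, |(ψ n).eval y| ≤ d n)
    (hsum : Summable fun n : ℕ => |ρ (n + 1)| * c (n + 1) * d (n + 1)) (x y : ℝ) :
    Summable fun n => lancasterTerm f₁ f₂ φ ψ ρ n x y :=
  .of_norm_bounded (hsum.mul_right _) fun n => abs_lancasterTerm_le hf₁ hf₂ hc hd n x y

lemma abs_tsum_lancasterTerm_le (hf₁ : IsDensityOn f₁ α₁ ω₁) (hf₂ : IsDensityOn f₂ α₂ ω₂)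
    (hc : ∀ n, ∀ x ∈ Icc α₁ ω₁, |(φ n).eval x| ≤ c n)
    (hd : ∀ n, ∀ y ∈ Icc α₂ ω₂, |(ψ n).eval y| ≤ d n)
    (hsum : Summable fun n : ℕ => |ρ (n + 1)| * c (n + 1) * d (n + 1))
    (hρ : ∑' n : ℕ, |ρ (n + 1)| * c (n + 1) * d (n + 1) ≤ 1) (x y : ℝ) :
    |∑' n, lancasterTerm f₁ f₂ φ ψ ρ n x y| ≤ f₁ x * f₂ y :=
  calc |∑' n, lancasterTerm f₁ f₂ φ ψ ρ n x y|
      ≤ ∑' n, |ρ (n + 1)| * c (n + 1) * d (n + 1) * (f₁ x * f₂ y) :=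
        tsum_of_norm_bounded (f := (lancasterTerm f₁ f₂ φ ψ ρ · x y)) (hsum.mul_right _).hasSum
          fun n => abs_lancasterTerm_le hf₁ hf₂ hc hd n x y
    _ ≤ 1 * (f₁ x * f₂ y) := by
        rw [tsum_mul_right]
        exact mul_le_mul_of_nonneg_right hρ (mul_nonneg (hf₁.1 x) (hf₂.1 y))
    _ = f₁ x * f₂ y := one_mul _

lemma lancaster_mem_Icc (hf₁ : IsDensityOn f₁ α₁ ω₁) (hf₂ : IsDensityOn f₂ α₂ ω₂)
    (hc : ∀ n, ∀ x ∈ Icc α₁ ω₁, |(φ n).eval x| ≤ c n)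
    (hd : ∀ n, ∀ y ∈ Icc α₂ ω₂, |(ψ n).eval y| ≤ d n)
    (hsum : Summable fun n : ℕ => |ρ (n + 1)| * c (n + 1) * d (n + 1))
    (hρ : ∑' n : ℕ, |ρ (n + 1)| * c (n + 1) * d (n + 1) ≤ 1) (x y : ℝ) :
    lancaster f₁ f₂ φ ψ ρ x y ∈ Icc 0 (2 * (f₁ x * f₂ y)) := by
  have h := abs_le.1 (abs_tsum_lancasterTerm_le hf₁ hf₂ hc hd hsum hρ x y)
  rw [lancaster_eq_add_tsum]
  constructor <;> linarith [h.1, h.2]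

lemma measurable_lancaster (hf₁ : IsDensityOn f₁ α₁ ω₁) (hf₂ : IsDensityOn f₂ α₂ ω₂)
    (hm₁ : Measurable f₁) (hm₂ : Measurable f₂)
    (hc : ∀ n, ∀ x ∈ Icc α₁ ω₁, |(φ n).eval x| ≤ c n)
    (hd : ∀ n, ∀ y ∈ Icc α₂ ω₂, |(ψ n).eval y| ≤ d n)
    (hsum : Summable fun n : ℕ => |ρ (n + 1)| * c (n + 1) * d (n + 1)) :
    Measurable fun p : ℝ × ℝ => lancaster f₁ f₂ φ ψ ρ p.1 p.2 := by
  simp_rw [lancaster_eq_add_tsum]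
  refine Measurable.add (by fun_prop) (measurable_tsum_of_summable (fun n => ?_)
    fun p => summable_lancasterTerm hf₁ hf₂ hc hd hsum p.1 p.2)
  have := (φ (n + 1)).continuous.measurable
  have := (ψ (n + 1)).continuous.measurable
  unfold lancasterTerm
  fun_prop

lemma integrable_lancaster_mul (hf₁ : IsDensityOn f₁ α₁ ω₁) (hf₂ : IsDensityOn f₂ α₂ ω₂)
    (hm₁ : Measurable f₁) (hm₂ : Measurable f₂)
    (hc : ∀ n, ∀ x ∈ Icc α₁ ω₁, |(φ n).eval x| ≤ c n)
    (hd : ∀ n, ∀ y ∈ Icc α₂ ω₂, |(ψ n).eval y| ≤ d n)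
    (hsum : Summable fun n : ℕ => |ρ (n + 1)| * c (n + 1) * d (n + 1))
    (hρ : ∑' n : ℕ, |ρ (n + 1)| * c (n + 1) * d (n + 1) ≤ 1)
    {u : ℝ × ℝ → ℝ} (hu : Continuous u) :
    Integrable (fun p : ℝ × ℝ => lancaster f₁ f₂ φ ψ ρ p.1 p.2 * u p)
      ((volume : Measure ℝ).prod volume) := by
  have hbox : IsCompact (Icc α₁ ω₁ ×ˢ Icc α₂ ω₂) := isCompact_Icc.prod isCompact_Icc
  obtain ⟨C, hC⟩ := hbox.exists_bound_of_continuousOn hu.continuousOn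
  refine ((hf₁.integrable.mul_prod hf₂.integrable).const_mul (2 * C)).mono'
    ((measurable_lancaster hf₁ hf₂ hm₁ hm₂ hc hd hsum).mul hu.measurable).aestronglyMeasurable
    (ae_of_all _ fun p => ?_)
  obtain ⟨hL0, hL2⟩ := lancaster_mem_Icc hf₁ hf₂ hc hd hsum hρ p.1 p.2
  rw [norm_mul, Real.norm_of_nonneg hL0]
  by_cases hp : p ∈ Icc α₁ ω₁ ×ˢ Icc α₂ ω₂
  · calc lancaster f₁ f₂ φ ψ ρ p.1 p.2 * ‖u p‖ ≤ 2 * (f₁ p.1 * f₂ p.2) * C :=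
          mul_le_mul hL2 (hC p hp) (norm_nonneg _) (hL0.trans hL2)
      _ = 2 * C * (f₁ p.1 * f₂ p.2) := by ring
  · have hff : f₁ p.1 * f₂ p.2 = 0 := by
      rcases not_and_or.1 hp with h | h
      · rw [hf₁.2.1 _ h, zero_mul]
      · rw [hf₂.2.1 _ h, mul_zero]
    rw [hff] at hL2 ⊢
    rw [le_antisymm (by linarith) hL0]
    simp


lemma integral_eval_mul_lancaster (hf₁ : IsDensityOn f₁ α₁ ω₁) (hf₂ : IsDensityOn f₂ α₂ ω₂)
    (hm₁ : Measurable f₁) (hc : ∀ n, ∀ x ∈ Icc α₁ ω₁, |(φ n).eval x| ≤ c n)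
    (hd : ∀ n, ∀ y ∈ Icc α₂ ω₂, |(ψ n).eval y| ≤ d n)
    (hsum : Summable fun n : ℕ => |ρ (n + 1)| * c (n + 1) * d (n + 1))
    (Q : Polynomial ℝ) (y : ℝ) :
    ∫ x, Q.eval x * lancaster f₁ f₂ φ ψ ρ x y = f₂ y * ((∫ x, Q.eval x * f₁ x) +
      ∑' n, ρ (n + 1) * (ψ (n + 1)).eval y * ∫ x, Q.eval x * ((φ (n + 1)).eval x * f₁ x)) := by
  by_cases hy : y ∈ Icc α₂ ω₂
  swap
  · simp [lancaster, hf₂.2.1 y hy]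
  obtain ⟨M, hM⟩ := Q.exists_abs_eval_le α₁ ω₁
  set F : ℕ → ℝ → ℝ := fun n x => Q.eval x * (ρ (n + 1) * (φ (n + 1)).eval x * (ψ (n + 1)).eval y)
  have hF : ∀ n, Measurable (F n) := fun n => by
    have := (φ (n + 1)).continuous.measurable
    have := Q.continuous.measurable
    fun_prop
  have hFB : ∀ n, ∀ x ∈ Icc α₁ ω₁, |F n x| ≤ M * (|ρ (n + 1)| * c (n + 1) * d (n + 1)) := by
    intro n x hx
    have hc0 := (abs_nonneg _).trans (hc (n + 1) x hx)
    simp only [F, abs_mul]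
    gcongr
    exacts [(abs_nonneg _).trans (hM x hx), hM x hx, hc (n + 1) x hx, hd (n + 1) y hy]
  have hB := hsum.mul_left M
  calc ∫ x, Q.eval x * lancaster f₁ f₂ φ ψ ρ x y
      = ∫ x, (f₂ y * (Q.eval x * f₁ x) + f₂ y * ((∑' n, F n x) * f₁ x)) :=
        integral_congr_ae (ae_of_all _ fun x => by simp only [lancaster, F, tsum_mul_left]; ring)
    _ = f₂ y * ((∫ x, Q.eval x * f₁ x) + ∑' n, ∫ x, F n x * f₁ x) := by
        rw [integral_add ((hf₁.integrable_eval_mul Q).const_mul _)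
          ((hf₁.integrable_tsum_mul hm₁ hF hFB hB).const_mul _), integral_const_mul,
          integral_const_mul, hf₁.integral_tsum_mul hF hFB hB, mul_add]
    _ = _ := by
        congr 2
        refine tsum_congr fun n => ?_
        rw [← integral_const_mul]
        exact integral_congr_ae (ae_of_all _ fun x => by simp only [F]; ring)

lemma integral_lancaster_fiber (hf₁ : IsDensityOn f₁ α₁ ω₁) (hf₂ : IsDensityOn f₂ α₂ ω₂)
    (hm₁ : Measurable f₁) (hφ : OrthonormalPolys f₁ φ)
    (hc : ∀ n, ∀ x ∈ Icc α₁ ω₁, |(φ n).eval x| ≤ c n)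
    (hd : ∀ n, ∀ y ∈ Icc α₂ ω₂, |(ψ n).eval y| ≤ d n)
    (hsum : Summable fun n : ℕ => |ρ (n + 1)| * c (n + 1) * d (n + 1)) (y : ℝ) :
    ∫ x, lancaster f₁ f₂ φ ψ ρ x y = f₂ y := by
  simpa [hφ.integral_eval_mul hf₁.2.2, hf₁.2.2] using
    integral_eval_mul_lancaster hf₁ hf₂ hm₁ hc hd hsum 1 y

lemma integral_mul_lancaster_fiber (hf₁ : IsDensityOn f₁ α₁ ω₁) (hf₂ : IsDensityOn f₂ α₂ ω₂)
    (hm₁ : Measurable f₁) (hφ : OrthonormalPolys f₁ φ)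
    (hc : ∀ n, ∀ x ∈ Icc α₁ ω₁, |(φ n).eval x| ≤ c n)
    (hd : ∀ n, ∀ y ∈ Icc α₂ ω₂, |(ψ n).eval y| ≤ d n)
    (hsum : Summable fun n : ℕ => |ρ (n + 1)| * c (n + 1) * d (n + 1)) (y : ℝ) :
    ∫ x, x * lancaster f₁ f₂ φ ψ ρ x y =
      (ρ 1 * (ψ 1).eval y - (φ 1).coeff 0) / (φ 1).leadingCoeff * f₂ y := by
  have h := integral_eval_mul_lancaster hf₁ hf₂ hm₁ hc hd hsum Polynomial.X y
  have h₀ := hφ.integral_mul_eval_mul hf₁ 0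
  simp only [Polynomial.eval_X, hφ.apply_zero hf₁.2.2, Polynomial.eval_one, one_mul] at h h₀
  rw [h, h₀, tsum_eq_single 0 fun n hn => by simp [hφ.integral_mul_eval_mul hf₁, hn],
    hφ.integral_mul_eval_mul hf₁]
  simp only [zero_ne_one, one_ne_zero, ↓reduceIte, mul_one, mul_zero, zero_sub, zero_add,
    sub_zero, one_div]
  ring

end Lancaster

theorem condExp_ae_eq_of_map_eq_lancaster {Ω : Type*} [MeasurableSpace Ω] {μ : Measure Ω}
    [IsFiniteMeasure μ] {X Y : Ω → ℝ} (hX : Measurable X) (hY : Measurable Y)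
    {α₁ ω₁ α₂ ω₂ : ℝ} {f₁ f₂ : ℝ → ℝ} (hf₁ : IsDensityOn f₁ α₁ ω₁)
    (hf₂ : IsDensityOn f₂ α₂ ω₂) (hm₁ : Measurable f₁) (hm₂ : Measurable f₂)
    {φ ψ : ℕ → Polynomial ℝ} (hφ : OrthonormalPolys f₁ φ) (hψ : OrthonormalPolys f₂ ψ)
    {c d ρ : ℕ → ℝ} (hc : ∀ n, ∀ x ∈ Icc α₁ ω₁, |(φ n).eval x| ≤ c n)
    (hd : ∀ n, ∀ y ∈ Icc α₂ ω₂, |(ψ n).eval y| ≤ d n)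
    (hsum : Summable fun n : ℕ => |ρ (n + 1)| * c (n + 1) * d (n + 1))
    (hρ : ∑' n : ℕ, |ρ (n + 1)| * c (n + 1) * d (n + 1) ≤ 1)
    (hjoint : Measure.map (fun ω => (X ω, Y ω)) μ =
      (volume : Measure (ℝ × ℝ)).withDensity
        (fun p => ENNReal.ofReal (lancaster f₁ f₂ φ ψ ρ p.1 p.2))) :
    μ[X | MeasurableSpace.comap Y inferInstance] =ᵐ[μ] fun ω =>
      ρ 1 * (ψ 1).leadingCoeff / (φ 1).leadingCoeff * Y ω +
        (ρ 1 * (ψ 1).coeff 0 - (φ 1).coeff 0) / (φ 1).leadingCoeff := by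
  rw [Measure.volume_eq_prod] at hjoint
  refine condExp_ae_eq_of_map_eq_withDensity (h := fun y => ρ 1 * (ψ 1).leadingCoeff /
    (φ 1).leadingCoeff * y + (ρ 1 * (ψ 1).coeff 0 - (φ 1).coeff 0) / (φ 1).leadingCoeff) hX hY
    (measurable_lancaster hf₁ hf₂ hm₁ hm₂ hc hd hsum)
    (fun p => (lancaster_mem_Icc hf₁ hf₂ hc hd hsum hρ p.1 p.2).1) hjoint (by fun_prop)
    (integrable_lancaster_mul hf₁ hf₂ hm₁ hm₂ hc hd hsum hρ continuous_fst)
    (integrable_lancaster_mul hf₁ hf₂ hm₁ hm₂ hc hd hsum hρ (by fun_prop)) fun y => ?_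
  simp_rw [mul_comm (lancaster _ _ _ _ _ _ _),
    integral_mul_lancaster_fiber hf₁ hf₂ hm₁ hφ hc hd hsum,
    integral_lancaster_fiber hf₁ hf₂ hm₁ hφ hc hd hsum,
    Polynomial.eval_eq_coeff_zero_add_leadingCoeff_mul (hψ.1 1)]
  ring

theorem stmt7_general {Ω : Type*} [MeasurableSpace Ω] (μ : Measure Ω) [IsProbabilityMeasure μ]
    (X Y : Ω → ℝ) (hX : Measurable X) (hY : Measurable Y)
    (α₁ ω₁ α₂ ω₂ : ℝ)
    (f₁ f₂ : ℝ → ℝ) (hf₁ : IsDensityOn f₁ α₁ ω₁) (hf₂ : IsDensityOn f₂ α₂ ω₂)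
    (hm₁ : Measurable f₁) (hm₂ : Measurable f₂)
    (φ ψ : ℕ → Polynomial ℝ)
    (hφ : OrthonormalPolys f₁ φ) (hψ : OrthonormalPolys f₂ ψ)
    (c d : ℕ → ℝ)
    (hc : ∀ n, c n = sSup ((fun x => |(φ n).eval x|) '' Set.Icc α₁ ω₁))
    (hd : ∀ n, d n = sSup ((fun y => |(ψ n).eval y|) '' Set.Icc α₂ ω₂))
    (ρ : ℕ → ℝ)
    (hsum : Summable fun n : ℕ => |ρ (n + 1)| * c (n + 1) * d (n + 1))
    (hρ : ∑' n : ℕ, |ρ (n + 1)| * c (n + 1) * d (n + 1) ≤ 1)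
    (hjoint : Measure.map (fun ω => (X ω, Y ω)) μ =
      (volume : Measure (ℝ × ℝ)).withDensity
        (fun p => ENNReal.ofReal (lancaster f₁ f₂ φ ψ ρ p.1 p.2)))
    (hρ₁ : ρ 1 ≠ 0) :
    ∃ a₁ a₀ b₁ b₀ : ℝ, a₁ ≠ 0 ∧ b₁ ≠ 0 ∧
      (μ[X | MeasurableSpace.comap Y inferInstance] =ᵐ[μ] fun ω => a₁ * Y ω + a₀) ∧
      (μ[Y | MeasurableSpace.comap X inferInstance] =ᵐ[μ] fun ω => b₁ * X ω + b₀) := by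
  have hc' n x (hx : x ∈ Icc α₁ ω₁) : |(φ n).eval x| ≤ c n := hc n ▸ (φ n).abs_eval_le_sSup hx
  have hd' n y (hy : y ∈ Icc α₂ ω₂) : |(ψ n).eval y| ≤ d n := hd n ▸ (ψ n).abs_eval_le_sSup hy
  have hjoint' : Measure.map (fun ω => (Y ω, X ω)) μ =
      (volume : Measure (ℝ × ℝ)).withDensity
        (fun p => ENNReal.ofReal (lancaster f₂ f₁ ψ φ ρ p.1 p.2)) := by
    rw [Measure.volume_eq_prod] at hjoint ⊢
    simpa only [Function.comp_def, Prod.fst_swap, Prod.snd_swap, lancaster_swap] using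
      map_prod_swap_eq_withDensity hX hY hjoint
  have hsum' : Summable fun n : ℕ => |ρ (n + 1)| * d (n + 1) * c (n + 1) := by
    simpa only [mul_right_comm _ (c _)] using hsum
  have hρ' : ∑' n : ℕ, |ρ (n + 1)| * d (n + 1) * c (n + 1) ≤ 1 := by
    simpa only [mul_right_comm _ (c _)] using hρ
  exact ⟨_, _, _, _, div_ne_zero (mul_ne_zero hρ₁ (hψ.2.1 1).ne') (hφ.2.1 1).ne',
    div_ne_zero (mul_ne_zero hρ₁ (hφ.2.1 1).ne') (hψ.2.1 1).ne',
    condExp_ae_eq_of_map_eq_lancaster hX hY hf₁ hf₂ hm₁ hm₂ hφ hψ hc' hd' hsum hρ hjoint,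
    condExp_ae_eq_of_map_eq_lancaster hY hX hf₂ hf₁ hm₂ hm₁ hψ hφ hd' hc' hsum' hρ' hjoint'⟩

/-- If `(X,Y)` has the Lancaster density, then for every `n ≥ 1`,
`E(φₙ(X)|Y) = ρₙ ψₙ(Y)` a.s. and `E(ψₙ(Y)|X) = ρₙ φₙ(X)` a.s. -/
theorem stmt7 {Ω : Type*} [MeasurableSpace Ω] (μ : Measure Ω) [IsProbabilityMeasure μ]
    (X Y : Ω → ℝ) (hX : Measurable X) (hY : Measurable Y)
    (α₁ ω₁ α₂ ω₂ : ℝ) (h₁ : α₁ < ω₁) (h₂ : α₂ < ω₂)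
    (f₁ f₂ : ℝ → ℝ) (hf₁ : IsDensityOn f₁ α₁ ω₁) (hf₂ : IsDensityOn f₂ α₂ ω₂)
    (hm₁ : Measurable f₁) (hm₂ : Measurable f₂)
    (φ ψ : ℕ → Polynomial ℝ)
    (hφ : OrthonormalPolys f₁ φ) (hψ : OrthonormalPolys f₂ ψ)
    (c d : ℕ → ℝ)
    (hc : ∀ n, c n = sSup ((fun x => |(φ n).eval x|) '' Set.Icc α₁ ω₁))
    (hd : ∀ n, d n = sSup ((fun y => |(ψ n).eval y|) '' Set.Icc α₂ ω₂))
    (ρ : ℕ → ℝ)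
    (hsum : Summable fun n : ℕ => |ρ (n + 1)| * c (n + 1) * d (n + 1))
    (hρ : ∑' n : ℕ, |ρ (n + 1)| * c (n + 1) * d (n + 1) ≤ 1)
    (hjoint : Measure.map (fun ω => (X ω, Y ω)) μ =
      (volume : Measure (ℝ × ℝ)).withDensity
        (fun p => ENNReal.ofReal (lancaster f₁ f₂ φ ψ ρ p.1 p.2)))
    (hρ₁ : ρ 1 ≠ 0) :
    ∃ a₁ a₀ b₁ b₀ : ℝ, a₁ ≠ 0 ∧ b₁ ≠ 0 ∧
      (μ[X | MeasurableSpace.comap Y inferInstance] =ᵐ[μ] fun ω => a₁ * Y ω + a₀) ∧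
      (μ[Y | MeasurableSpace.comap X inferInstance] =ᵐ[μ] fun ω => b₁ * X ω + b₀) :=
  stmt7_general μ X Y hX hY α₁ ω₁ α₂ ω₂ f₁ f₂ hf₁ hf₂ hm₁ hm₂ φ ψ hφ hψ c d hc hd ρ hsum hρ hjoint
    hρ₁
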